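/- Define a 4-dimensional superalgebra over ℂ with even basis {e_1, e_2} and odd basis {f_1, f_2}, and nonzero products: e_1·e_1 = e_1, e_2·e_2 = e_2, e_1·f_i = (1/2) f_i, e_2·f_i = (1/2) f_i for i = 1,2, and f_1·f_2 = e_1 + t e_2 = -f_2·f_1 for a parameter t ∈ ℂ. Then for every t this is a Jordan superalgebra (satisfies the graded Jordan identity). -/

import Mathlib

noncomputable section

/-- The sign `(-1)^a` for a parity `a : ZMod 2`, as a complex number. -/
def sgn (a : ZMod 2) : ℂ := if a = 0 then 1 else -1

/-- Parities of the basis vectors. -/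
def par : Fin 4 → ZMod 2 := ![0, 0, 1, 1]

/-- The homogeneous component of parity `a`: the span of the basis vectors of parity `a`. -/
def Vgrade (a : ZMod 2) : Submodule ℂ (Fin 4 → ℂ) :=
  Submodule.span ℂ {v | ∃ i : Fin 4, par i = a ∧ v = Pi.single i 1}

/-- Multiplication of the family 𝒥₁₆ᵗ: `eᵢ² = eᵢ`, `eᵢ·fⱼ = (1/2)fⱼ`, `f₁·f₂ = e₁ + t·e₂` (basis `e₁, e₂, f₁, f₂`). -/
def jmul (t : ℂ) (x y : Fin 4 → ℂ) : Fin 4 → ℂ :=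
  ![x 0 * y 0 + (x 2 * y 3 - x 3 * y 2),
    x 1 * y 1 + t * (x 2 * y 3 - x 3 * y 2),
    (1 / 2) * (x 0 * y 2 + x 2 * y 0 + x 1 * y 2 + x 2 * y 1),
    (1 / 2) * (x 0 * y 3 + x 3 * y 0 + x 1 * y 3 + x 3 * y 1)]

/-! A homogeneous element of parity `a` is `homog a p q`, with coordinates `p, q` in the basis
`e₁, e₂` (`a = 0`) or `f₁, f₂` (`a = 1`). In these coordinates the product is a four-line
multiplication table: `e`-parts multiply componentwise, an even element acts on the odd part by
the scalar `(p + q) / 2`, and two odd elements multiply to their determinant times `e₁ + t e₂`.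
Grading, supercommutativity and the Jordan superidentity then reduce, for each choice of parities,
to polynomial identities in the coordinates. -/

def homog : ZMod 2 → ℂ → ℂ → Fin 4 → ℂ
  | 0, p, q => ![p, q, 0, 0]
  | 1, p, q => ![0, 0, p, q]

theorem zmod_two_eq_zero_or_one : ∀ a : ZMod 2, a = 0 ∨ a = 1 := by decide

theorem mem_Vgrade_iff {a : ZMod 2} {x : Fin 4 → ℂ} :
    x ∈ Vgrade a ↔ ∀ i, par i ≠ a → x i = 0 := by
  constructor
  · intro hx
    induction hx using Submodule.span_induction with
    | mem v hv =>
      obtain ⟨j, rfl, rfl⟩ := hv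
      exact fun i hi => Pi.single_eq_of_ne (ne_of_apply_ne par hi) 1
    | zero => exact fun _ _ => rfl
    | add u v _ _ hu hv => intro i hi; simp [hu i hi, hv i hi]
    | smul c u _ hu => intro i hi; simp [hu i hi]
  · intro h
    rw [← Finset.univ_sum_single x]
    refine Submodule.sum_mem _ fun i _ => ?_
    by_cases hi : par i = a
    · rw [← mul_one (x i), ← smul_eq_mul, Pi.single_smul']
      exact Submodule.smul_mem _ _ (Submodule.subset_span ⟨i, hi, rfl⟩)
    · simp [h i hi]

theorem homog_mem_Vgrade (a : ZMod 2) (p q : ℂ) : homog a p q ∈ Vgrade a := by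
  refine mem_Vgrade_iff.2 fun i hi => ?_
  obtain rfl | rfl := zmod_two_eq_zero_or_one a <;> fin_cases i <;>
    first | exact absurd rfl hi | rfl

theorem exists_eq_homog_of_mem_Vgrade {a : ZMod 2} {x : Fin 4 → ℂ} (hx : x ∈ Vgrade a) :
    ∃ p q, x = homog a p q := by
  rw [mem_Vgrade_iff] at hx
  obtain rfl | rfl := zmod_two_eq_zero_or_one a
  · refine ⟨x 0, x 1, funext fun i => ?_⟩
    fin_cases i <;> first | rfl | exact hx _ (by decide)
  · refine ⟨x 2, x 3, funext fun i => ?_⟩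
    fin_cases i <;> first | rfl | exact hx _ (by decide)

theorem homog_add (a : ZMod 2) (p q r s : ℂ) :
    homog a p q + homog a r s = homog a (p + r) (q + s) := by
  obtain rfl | rfl := zmod_two_eq_zero_or_one a <;> simp [homog]

theorem smul_homog (a : ZMod 2) (c p q : ℂ) : c • homog a p q = homog a (c * p) (c * q) := by
  obtain rfl | rfl := zmod_two_eq_zero_or_one a <;> simp [homog]

section MultiplicationTable

variable (t p q r s : ℂ)

theorem jmul_homog_zero_zero : jmul t (homog 0 p q) (homog 0 r s) = homog 0 (p * r) (q * s) := by
  funext i; fin_cases i <;> simp [homog, jmul]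

theorem jmul_homog_zero_one :
    jmul t (homog 0 p q) (homog 1 r s) = homog 1 ((p + q) / 2 * r) ((p + q) / 2 * s) := by
  funext i; fin_cases i <;> simp [homog, jmul] <;> ring

theorem jmul_homog_one_zero :
    jmul t (homog 1 p q) (homog 0 r s) = homog 1 ((r + s) / 2 * p) ((r + s) / 2 * q) := by
  funext i; fin_cases i <;> simp [homog, jmul] <;> ring

theorem jmul_homog_one_one :
    jmul t (homog 1 p q) (homog 1 r s) = homog 0 (p * s - q * r) (t * (p * s - q * r)) := by
  funext i; fin_cases i <;> simp [homog, jmul]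

end MultiplicationTable

section Homogeneous

variable (t : ℂ) {a b c d : ZMod 2} {x y z w : Fin 4 → ℂ}

theorem jmul_mem_Vgrade (hx : x ∈ Vgrade a) (hy : y ∈ Vgrade b) :
    jmul t x y ∈ Vgrade (a + b) := by
  obtain ⟨p₁, q₁, rfl⟩ := exists_eq_homog_of_mem_Vgrade hx
  obtain ⟨p₂, q₂, rfl⟩ := exists_eq_homog_of_mem_Vgrade hy
  rcases zmod_two_eq_zero_or_one a with rfl | rfl <;>
  rcases zmod_two_eq_zero_or_one b with rfl | rfl <;>
  · simp only [jmul_homog_zero_zero, jmul_homog_zero_one, jmul_homog_one_zero, jmul_homog_one_one]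
    exact homog_mem_Vgrade _ _ _

theorem jmul_supercomm (hx : x ∈ Vgrade a) (hy : y ∈ Vgrade b) :
    jmul t x y = sgn (a * b) • jmul t y x := by
  obtain ⟨p₁, q₁, rfl⟩ := exists_eq_homog_of_mem_Vgrade hx
  obtain ⟨p₂, q₂, rfl⟩ := exists_eq_homog_of_mem_Vgrade hy
  rcases zmod_two_eq_zero_or_one a with rfl | rfl <;>
  rcases zmod_two_eq_zero_or_one b with rfl | rfl <;>
  · simp +decide only [sgn, jmul_homog_zero_zero, jmul_homog_zero_one, jmul_homog_one_zero,
      jmul_homog_one_one, smul_homog, if_true, if_false]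
    congr 1 <;> ring

theorem jmul_jordan_super_identity (hx : x ∈ Vgrade a) (hy : y ∈ Vgrade b) (hz : z ∈ Vgrade c)
    (hw : w ∈ Vgrade d) :
    jmul t (jmul t (jmul t x y) z) w
        + sgn (b * c + b * d + c * d) • jmul t (jmul t (jmul t x w) z) y
        + sgn (a * b + a * c + a * d + c * d) • jmul t (jmul t (jmul t y w) z) x
      = jmul t (jmul t x y) (jmul t z w)
        + sgn (d * (b + c)) • jmul t (jmul t x w) (jmul t y z)
        + sgn (b * c) • jmul t (jmul t x z) (jmul t y w) := by
  obtain ⟨p₁, q₁, rfl⟩ := exists_eq_homog_of_mem_Vgrade hx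
  obtain ⟨p₂, q₂, rfl⟩ := exists_eq_homog_of_mem_Vgrade hy
  obtain ⟨p₃, q₃, rfl⟩ := exists_eq_homog_of_mem_Vgrade hz
  obtain ⟨p₄, q₄, rfl⟩ := exists_eq_homog_of_mem_Vgrade hw
  rcases zmod_two_eq_zero_or_one a with rfl | rfl <;>
  rcases zmod_two_eq_zero_or_one b with rfl | rfl <;>
  rcases zmod_two_eq_zero_or_one c with rfl | rfl <;>
  rcases zmod_two_eq_zero_or_one d with rfl | rfl <;>
  · simp +decide only [sgn, jmul_homog_zero_zero, jmul_homog_zero_one, jmul_homog_one_zero,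
      jmul_homog_one_one, smul_homog, homog_add, if_true, if_false]
    congr 1 <;> ring

end Homogeneous

theorem J16t_is_jordan_superalgebra (t : ℂ) :
    (∀ a b : ZMod 2, ∀ x ∈ Vgrade a, ∀ y ∈ Vgrade b, jmul t x y ∈ Vgrade (a + b)) ∧
    (∀ a b : ZMod 2, ∀ x ∈ Vgrade a, ∀ y ∈ Vgrade b,
      jmul t x y = sgn (a * b) • jmul t y x) ∧
    (∀ a b c d : ZMod 2, ∀ x ∈ Vgrade a, ∀ y ∈ Vgrade b, ∀ z ∈ Vgrade c, ∀ w ∈ Vgrade d,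
      jmul t (jmul t (jmul t x y) z) w
        + sgn (b * c + b * d + c * d) • jmul t (jmul t (jmul t x w) z) y
        + sgn (a * b + a * c + a * d + c * d) • jmul t (jmul t (jmul t y w) z) x
      = jmul t (jmul t x y) (jmul t z w)
        + sgn (d * (b + c)) • jmul t (jmul t x w) (jmul t y z)
        + sgn (b * c) • jmul t (jmul t x z) (jmul t y w)) := by
  exact ⟨fun _ _ _ hx _ hy => jmul_mem_Vgrade t hx hy,
    fun _ _ _ hx _ hy => jmul_supercomm t hx hy,
    fun _ _ _ _ _ hx _ hy _ hz _ hw => jmul_jordan_super_identity t hx hy hz hw⟩
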